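/- For μ ∈ Γ_{k−1} ⊂ ℝⁿ and each index i, σ_{k−1}(μ|i)·σ_{k−1}(μ) − σ_k(μ)·σ_{k−2}(μ|i) ≥ (n/(k(n−k+1)))·σ_{k−1}(μ|i)², where (μ|i) denotes the vector μ with the i-th entry deleted. In particular this quantity is nonnegative. -/

import Mathlib

/-!
Expanding `σ_j(μ) = σ_j(μ|i) + μ_i σ_{j-1}(μ|i)`, the terms containing `μ_i` cancel and
the quantity becomes `σ_{k-1}(μ|i)² - σ_k(μ|i) σ_{k-2}(μ|i)`. Newton's inequality for the
`n - 1` real numbers `μ|i` bounds `σ_k(μ|i) σ_{k-2}(μ|i)` by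
`(k-1)(n-k) / (k(n-k+1)) · σ_{k-1}(μ|i)²`, which leaves exactly
`n / (k(n-k+1)) · σ_{k-1}(μ|i)²`.

Newton's inequality is proved by induction on the number of entries. By Rolle's theorem the
derivative of the real-rooted polynomial `∏ (X + r)` is again real-rooted, and its roots have
rescaled elementary symmetric functions; this handles every index below the top one. At the top
index, inverting the entries moves the inequality to index `0`, and two entries is AM-GM.
-/

open Finset

/-- The k-th elementary symmetric polynomial of x : Fin n -> R. -/
noncomputable def esymm (n k : ℕ) (x : Fin n → ℝ) : ℝ :=
  ∑ s ∈ Finset.univ.powersetCard k, ∏ i ∈ s, x i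

/-- The Garding cone Gamma_k. -/
def Gamma (n k : ℕ) : Set (Fin n → ℝ) :=
  {x | ∀ j, 1 ≤ j → j ≤ k → 0 < esymm n j x}

/-- The k-th elementary symmetric polynomial of x with the i-th entry deleted. -/
noncomputable def esymmDel (n k : ℕ) (x : Fin n → ℝ) (i : Fin n) : ℝ :=
  ∑ s ∈ (Finset.univ.erase i).powersetCard k, ∏ j ∈ s, x j

open Polynomial

theorem Polynomial.natDegree_multiset_prod_X_add_C {R : Type*} [CommRing R] [Nontrivial R]
    (s : Multiset R) : (s.map (X + C ·)).prod.natDegree = Multiset.card s := by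
  simp [natDegree_multiset_prod_of_monic, monic_X_add_C]

/-- Rolle's theorem: between consecutive roots of `p` lies a root of `p'`. -/
theorem Polynomial.Splits.derivative {p : ℝ[X]} (hp : p.Splits) : p.derivative.Splits := by
  rw [splits_iff_card_roots] at hp ⊢
  have := card_roots_le_derivative p
  have := card_roots' p.derivative
  rw [natDegree_derivative] at this ⊢
  omega

namespace Multiset

section CommSemiring

variable {R : Type*} [CommSemiring R]

theorem esymm_zero (s : Multiset R) : s.esymm 0 = 1 := by
  simp [esymm, powersetCard_zero_left]

theorem esymm_eq_zero_of_card_lt {s : Multiset R} {j : ℕ} (h : card s < j) : s.esymm j = 0 := by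
  simp [esymm, powersetCard_eq_empty _ h]

theorem esymm_cons_succ (a : R) (s : Multiset R) (j : ℕ) :
    (a ::ₘ s).esymm (j + 1) = s.esymm (j + 1) + a * s.esymm j := by
  simp [esymm, powersetCard_cons, map_map, sum_map_mul_left]

theorem esymm_card (s : Multiset R) : s.esymm (card s) = s.prod := by
  induction s using Multiset.induction with
  | empty => simp [esymm_zero]
  | cons a s ih => simp [esymm_cons_succ, esymm_eq_zero_of_card_lt, ih]

end CommSemiring

theorem esymm_map_inv_mul_prod {K : Type*} [Field K] {s : Multiset K} (hs : (0 : K) ∉ s)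
    {j l : ℕ} (h : card s = j + l) : (s.map (·⁻¹)).esymm j * s.prod = s.esymm l := by
  induction s using Multiset.induction generalizing j l with
  | empty =>
    obtain ⟨rfl, rfl⟩ : j = 0 ∧ l = 0 := by simp at h; omega
    simp [esymm_zero]
  | cons a s ih =>
    have ha : a ≠ 0 := fun h => hs (h ▸ mem_cons_self a s)
    have hs' : (0 : K) ∉ s := fun h => hs (mem_cons_of_mem h)
    rw [card_cons] at h
    rcases j with _ | j
    · simp [esymm_zero, ← esymm_card, h]
    rw [map_cons, esymm_cons_succ, prod_cons]
    rcases l with _ | l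
    · rw [esymm_eq_zero_of_card_lt (by simp; omega), esymm_zero, ← esymm_zero s,
        ← ih hs' (by omega : card s = j + 0)]
      linear_combination ((s.map (·⁻¹)).esymm j * s.prod) * inv_mul_cancel₀ ha
    · rw [esymm_cons_succ, ← ih hs' (by omega : card s = j + 1 + l),
        ← ih hs' (by omega : card s = j + (l + 1))]
      linear_combination ((s.map (·⁻¹)).esymm j * s.prod) * inv_mul_cancel₀ ha

/-- The roots of `(∏_{r ∈ s} (X + r))'`, negated. -/
theorem exists_esymm_eq_of_derivative {s : Multiset ℝ} {m : ℕ} (hs : card s = m + 1) :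
    ∃ w : Multiset ℝ, card w = m ∧
      ∀ j ≤ m, ((m : ℝ) + 1) * w.esymm j = ((m : ℝ) + 1 - j) * s.esymm j := by
  set f : ℝ[X] := (s.map (X + C ·)).prod
  have hf : f.Splits := .multisetProd (by simp [Splits.X_add_C])
  have hfdeg : f.natDegree = m + 1 := by rw [natDegree_multiset_prod_X_add_C, hs]
  have hlead : f.derivative.leadingCoeff = m + 1 := by
    simp [f, monic_multiset_prod_of_monic, monic_X_add_C, hfdeg]
  obtain ⟨w, hw⟩ := splits_iff_exists_multiset'.1 hf.derivative
  rw [hlead] at hw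
  have hcard : card w = m := by
    have := congrArg natDegree hw
    rwa [natDegree_C_mul (by positivity), natDegree_multiset_prod_X_add_C, natDegree_derivative,
      hfdeg, eq_comm] at this
  refine ⟨w, hcard, fun j hj => ?_⟩
  have := congrArg (coeff · (m - j)) hw
  simp only [coeff_derivative, coeff_C_mul, f] at this
  rw [prod_X_add_C_coeff _ (by omega), prod_X_add_C_coeff _ (by omega), hs, hcard,
    show m + 1 - (m - j + 1) = j by omega, show m - (m - j) = j by omega,
    Nat.cast_sub hj] at this
  linear_combination -this

/-- Newton's inequality `E_{j+1}² ≥ E_j E_{j+2}` for the normalized `E_j = e_j / (m choose j)`,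
`m = card s`, with the binomial coefficients cleared. -/
def NewtonIneq (s : Multiset ℝ) (j : ℕ) : Prop :=
  ((j : ℝ) + 2) * (card s - j) * (s.esymm (j + 2) * s.esymm j) ≤
    ((j : ℝ) + 1) * (card s - j - 1) * s.esymm (j + 1) ^ 2

theorem newtonIneq_of_esymm_eq_zero {s : Multiset ℝ} {j : ℕ} (h : s.esymm (j + 2) = 0) :
    NewtonIneq s j := by
  rw [NewtonIneq, h, zero_mul, mul_zero]
  rcases Nat.lt_or_ge (card s) (j + 1) with hlt | hge
  · simp [esymm_eq_zero_of_card_lt hlt]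
  · have : (j : ℝ) + 1 ≤ card s := by exact_mod_cast hge
    have : (0 : ℝ) ≤ card s - j - 1 := by linarith
    positivity

theorem newtonIneq_of_card_eq_two {s : Multiset ℝ} (h : card s = 2) : NewtonIneq s 0 := by
  obtain ⟨a, b, rfl⟩ := card_eq_two.1 h
  norm_num [NewtonIneq, esymm_zero]
  nlinarith [sq_nonneg (a - b)]

theorem newtonIneq_of_card_eq_succ {m j : ℕ}
    (hm : ∀ w : Multiset ℝ, card w = m → NewtonIneq w j) {s : Multiset ℝ}
    (hs : card s = m + 1) (hj : j + 2 ≤ m) : NewtonIneq s j := by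
  obtain ⟨w, hw, hsw⟩ := exists_esymm_eq_of_derivative hs
  have h := hm w hw
  have e0 := hsw j (by omega)
  have e1 := hsw (j + 1) (by omega)
  have e2 := hsw (j + 2) (by omega)
  rw [NewtonIneq, hw] at h
  rw [NewtonIneq, hs]
  push_cast at e1 e2 h ⊢
  have hjm : (j : ℝ) + 2 ≤ m := by exact_mod_cast hj
  set A : ℝ := m + 1
  have hc : 0 < ((m : ℝ) - j) * ((m : ℝ) - j - 1) := by nlinarith
  have hA := mul_le_mul_of_nonneg_left h (sq_nonneg A)
  refine le_of_mul_le_mul_left ?_ hc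
  linear_combination hA
    - (j + 2) * ((m : ℝ) - j) * (A * w.esymm (j + 2) * e0 + (A - j) * s.esymm j * e2)
    + (j + 1) * ((m : ℝ) - j - 1) * (A * w.esymm (j + 1) + (A - j - 1) * s.esymm (j + 1)) * e1

theorem newtonIneq_of_newtonIneq_map_inv {s : Multiset ℝ} {j : ℕ} (hs : (0 : ℝ) ∉ s)
    (hcard : card s = j + 2) (h : NewtonIneq (s.map (·⁻¹)) 0) : NewtonIneq s j := by
  have e1 := esymm_map_inv_mul_prod hs (j := 1) (l := j + 1) (by omega)
  have e2 := esymm_map_inv_mul_prod hs (j := 2) (l := j) (by omega)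
  have hP : s.esymm (j + 2) = s.prod := hcard ▸ esymm_card s
  rw [NewtonIneq, card_map, hcard, esymm_zero] at h
  rw [NewtonIneq, hcard, hP, ← e1, ← e2]
  push_cast at h ⊢
  linear_combination s.prod ^ 2 * h

theorem newtonIneq (s : Multiset ℝ) (j : ℕ) : NewtonIneq s j := by
  suffices ∀ m, ∀ s : Multiset ℝ, card s = m → ∀ j, NewtonIneq s j from this _ s rfl j
  intro m
  induction m with
  | zero => exact fun s hs j => newtonIneq_of_esymm_eq_zero (esymm_eq_zero_of_card_lt (by omega))
  | succ m ih =>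
    intro s hs j
    rcases lt_trichotomy (j + 2) (m + 1) with hlt | heq | hgt
    · exact newtonIneq_of_card_eq_succ (fun w hw => ih w hw j) hs (by omega)
    · rcases Nat.eq_zero_or_pos j with rfl | hj
      · exact newtonIneq_of_card_eq_two (by omega)
      by_cases h0 : (0 : ℝ) ∈ s
      · exact newtonIneq_of_esymm_eq_zero (by rw [heq, ← hs, esymm_card]; exact prod_eq_zero h0)
      · refine newtonIneq_of_newtonIneq_map_inv h0 (by omega) ?_
        exact newtonIneq_of_card_eq_succ (fun w hw => ih w hw 0) (by rw [card_map, hs]) (by omega)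
    · exact newtonIneq_of_esymm_eq_zero (esymm_eq_zero_of_card_lt (by omega))

end Multiset

theorem esymmDel_eq_esymm_map (n j : ℕ) (μ : Fin n → ℝ) (i : Fin n) :
    esymmDel n j μ i = ((univ.erase i).val.map μ).esymm j :=
  (esymm_map_val μ _ j).symm

theorem esymm_succ_eq_esymmDel (n j : ℕ) (μ : Fin n → ℝ) (i : Fin n) :
    esymm n (j + 1) μ = esymmDel n (j + 1) μ i + μ i * esymmDel n j μ i := by
  have huniv : (univ : Finset (Fin n)).val = i ::ₘ (univ.erase i).val := by
    rw [erase_val, Multiset.cons_erase (mem_univ_val i)]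
  rw [esymm, ← esymm_map_val, huniv, Multiset.map_cons, Multiset.esymm_cons_succ,
    esymmDel_eq_esymm_map, esymmDel_eq_esymm_map]

theorem esymmDel_newton (n j : ℕ) (hn : 1 ≤ n) (μ : Fin n → ℝ) (i : Fin n) :
    ((j : ℝ) + 2) * (n - 1 - j) * (esymmDel n (j + 2) μ i * esymmDel n j μ i) ≤
      ((j : ℝ) + 1) * (n - 1 - j - 1) * esymmDel n (j + 1) μ i ^ 2 := by
  have h := ((univ.erase i).val.map μ).newtonIneq j
  have hcard : (Multiset.card ((univ.erase i).val.map μ) : ℝ) = n - 1 := by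
    simp [Nat.cast_sub hn]
  rwa [Multiset.NewtonIneq, hcard, ← esymmDel_eq_esymm_map, ← esymmDel_eq_esymm_map,
    ← esymmDel_eq_esymm_map] at h

theorem esymm_del_ineq_general (n k : ℕ) (hk : 2 ≤ k) (hkn : k ≤ n)
    (μ : Fin n → ℝ) (i : Fin n) :
    (n : ℝ) / ((k : ℝ) * ((n : ℝ) - (k : ℝ) + 1)) * (esymmDel n (k - 1) μ i) ^ 2 ≤
      esymmDel n (k - 1) μ i * esymm n (k - 1) μ - esymm n k μ * esymmDel n (k - 2) μ i ∧
    0 ≤ esymmDel n (k - 1) μ i * esymm n (k - 1) μ - esymm n k μ * esymmDel n (k - 2) μ i := by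
  obtain ⟨j, rfl⟩ : ∃ j, k = j + 2 := ⟨k - 2, by omega⟩
  rw [show j + 2 - 1 = j + 1 by omega, Nat.add_sub_cancel]
  have hcancel :
      esymmDel n (j + 1) μ i * esymm n (j + 1) μ - esymm n (j + 2) μ * esymmDel n j μ i =
        esymmDel n (j + 1) μ i ^ 2 - esymmDel n (j + 2) μ i * esymmDel n j μ i := by
    rw [esymm_succ_eq_esymmDel n j μ i, esymm_succ_eq_esymmDel n (j + 1) μ i]
    ring
  have hnewton := esymmDel_newton n j (by omega) μ i
  have hjn : (j : ℝ) + 2 ≤ n := by exact_mod_cast hkn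
  have hc : 0 < ((j + 2 : ℕ) : ℝ) * (n - (j + 2 : ℕ) + 1) := by push_cast; nlinarith
  have hbound :
      (n : ℝ) / (((j + 2 : ℕ) : ℝ) * (n - (j + 2 : ℕ) + 1)) *
          esymmDel n (j + 1) μ i ^ 2 ≤
        esymmDel n (j + 1) μ i ^ 2 - esymmDel n (j + 2) μ i * esymmDel n j μ i := by
    rw [div_mul_eq_mul_div, div_le_iff₀ hc]
    push_cast
    linear_combination hnewton
  rw [hcancel]
  exact ⟨hbound, le_trans (by positivity) hbound⟩

/-- For mu in Gamma_{k-1}: sigma_{k-1}(mu|i) sigma_{k-1}(mu) - sigma_k(mu) sigma_{k-2}(mu|i)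
is at least (n/(k(n-k+1))) sigma_{k-1}(mu|i)^2, and in particular nonnegative. -/
theorem esymm_del_ineq (n k : ℕ) (hk : 2 ≤ k) (hkn : k ≤ n)
    (μ : Fin n → ℝ) (hμ : μ ∈ Gamma n (k - 1)) (i : Fin n) :
    (n : ℝ) / ((k : ℝ) * ((n : ℝ) - (k : ℝ) + 1)) * (esymmDel n (k - 1) μ i) ^ 2 ≤
      esymmDel n (k - 1) μ i * esymm n (k - 1) μ - esymm n k μ * esymmDel n (k - 2) μ i ∧
    0 ≤ esymmDel n (k - 1) μ i * esymm n (k - 1) μ - esymm n k μ * esymmDel n (k - 2) μ i :=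
  esymm_del_ineq_general n k hk hkn μ i
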